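/- arXiv:2503.12465 — 2 statements merged into one kernel-verified Lean document; each statement's English description precedes it below -/
import Mathlib

section
/- Let e : (0,∞) → ℝ be a Synge-type EOS and d ≥ 1. Let (ρ, v, θ) be a primitive state (ρ > 0, θ > 0, |v| < 1) with conservative vector U = U(ρ,v,θ) and fluxes F_i = F_i(ρ,v,θ). Then for every β ≥ 1, every i ∈ {1,…,d}, every sign s ∈ {+1,−1}, and every v_* ∈ ℝ^d with |v_*| < 1, one has (βU + s·F_i)·ñ_*(v_*) > 0. -/
/-!
Pairing with `ñ_*(v_*)` is positive on the open future light cone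
`{W : W_{d+1} > √(W₀² + |W'|²)}`, by Cauchy–Schwarz in `ℝ^{d+1}`: `(√(1 - |v_*|²), v_*)` is a
unit vector. For `W = βU + sF_i` one computes
`W_{d+1}² - W₀² - |W'|² = ρ² (γ² (β + s vᵢ)² (h² - 2hθ - 1) + (β² - s²) θ²)`,
and `h² - 2hθ - 1 = (e + 1)² - θ² - 1` is positive for a Synge-type EOS: `(e + 1)² - θ²` has
derivative `2 ((e + 1) e' - θ) > 0` and is `> 1 - θ²` because `e > 0`, so it exceeds `1`.
-/

open scoped BigOperators

noncomputable section

/-- Euclidean dot product on `Fin d → ℝ`. -/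
def dotp {d : ℕ} (v w : Fin d → ℝ) : ℝ := ∑ i, v i * w i

/-- Squared Euclidean norm on `Fin d → ℝ`. -/
def nsq {d : ℕ} (v : Fin d → ℝ) : ℝ := ∑ i, (v i) ^ 2

/-- Euclidean norm on `Fin d → ℝ`. -/
def nrm {d : ℕ} (v : Fin d → ℝ) : ℝ := Real.sqrt (nsq v)

/-- `Z(θ) = ∫₁^θ e'(ξ)/ξ dξ`. -/
def Zfun (e : ℝ → ℝ) (θ : ℝ) : ℝ := ∫ ξ in (1:ℝ)..θ, deriv e ξ / ξ

/-- Specific enthalpy `h(θ) = 1 + θ + e(θ)`. -/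
def hfun (e : ℝ → ℝ) (θ : ℝ) : ℝ := 1 + θ + e θ

/-- Lorentz factor `γ = (1 − |v|²)^{−1/2}`. -/
def gam {d : ℕ} (v : Fin d → ℝ) : ℝ := 1 / Real.sqrt (1 - nsq v)

/-- Conservative vector `U(ρ,v,θ) = (ργ, ρh(θ)γ²v, ρh(θ)γ² − p)` with `p = ρθ`,
viewed as an element of `ℝ × ℝ^d × ℝ ≃ ℝ^{d+2}`. -/
def Uvec (e : ℝ → ℝ) {d : ℕ} (ρ : ℝ) (v : Fin d → ℝ) (θ : ℝ) : ℝ × (Fin d → ℝ) × ℝ :=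
  (ρ * gam v,
   fun j => ρ * hfun e θ * (gam v) ^ 2 * v j,
   ρ * hfun e θ * (gam v) ^ 2 - ρ * θ)

/-- Flux `F_i(ρ,v,θ) = (ργv_i, ρh(θ)γ²v_i v + p e_i, ρh(θ)γ²v_i)` with `p = ρθ`. -/
def Fvec (e : ℝ → ℝ) {d : ℕ} (i : Fin d) (ρ : ℝ) (v : Fin d → ℝ) (θ : ℝ) :
    ℝ × (Fin d → ℝ) × ℝ :=
  (ρ * gam v * v i,
   fun j => ρ * hfun e θ * (gam v) ^ 2 * v i * v j + ρ * θ * (if j = i then 1 else 0),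
   ρ * hfun e θ * (gam v) ^ 2 * v i)

/-- Euclidean inner product on `ℝ^{d+2} = ℝ × ℝ^d × ℝ`. -/
def dot3 {d : ℕ} (u w : ℝ × (Fin d → ℝ) × ℝ) : ℝ :=
  u.1 * w.1 + dotp u.2.1 w.2.1 + u.2.2 * w.2.2

/-- `ñ_*(v_*) = (−√(1−|v_*|²), −v_*, 1)`. -/
def ntil {d : ℕ} (vs : Fin d → ℝ) : ℝ × (Fin d → ℝ) × ℝ :=
  (-Real.sqrt (1 - nsq vs), fun j => -vs j, 1)

/-- `n_*(v_*,θ_*) = (−h(θ_*)√(1−|v_*|²), −v_*, 1)`. -/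
def nstar (e : ℝ → ℝ) {d : ℕ} (vs : Fin d → ℝ) (θs : ℝ) : ℝ × (Fin d → ℝ) × ℝ :=
  (-(hfun e θs) * Real.sqrt (1 - nsq vs), fun j => -vs j, 1)

/-- `p_*(θ_*) = θ_* exp(Z(θ_*) − σ)`. -/
def pstar (e : ℝ → ℝ) (σ θs : ℝ) : ℝ := θs * Real.exp (Zfun e θs - σ)

/-- The admissible set `Ω_σ ⊆ ℝ^{d+2}`. -/
def OmegaSet (e : ℝ → ℝ) (d : ℕ) (σ : ℝ) : Set (ℝ × (Fin d → ℝ) × ℝ) :=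
  { u | ∃ ρ θ : ℝ, ∃ v : Fin d → ℝ,
      0 < ρ ∧ 0 < θ ∧ nrm v < 1 ∧ σ ≤ -Real.log ρ + Zfun e θ ∧ u = Uvec e ρ v θ }

def IsSyngeEOS (e : ℝ → ℝ) : Prop :=
  ∀ ξ : ℝ, 0 < ξ → DifferentiableAt ℝ e ξ ∧ 0 < e ξ ∧ ξ / (e ξ + 1) < deriv e ξ

namespace IsSyngeEOS

variable {e : ℝ → ℝ} (he : IsSyngeEOS e)
include he

theorem strictMonoOn_sq_add_one_sub_sq :
    StrictMonoOn (fun ξ => (e ξ + 1) ^ 2 - ξ ^ 2) (Set.Ioi 0) := by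
  have hderiv : ∀ x : ℝ, 0 < x →
      HasDerivAt (fun ξ => (e ξ + 1) ^ 2 - ξ ^ 2) (2 * (e x + 1) * deriv e x - 2 * x) x := by
    intro x hx
    refine ((((he x hx).1.hasDerivAt.add_const 1).fun_pow 2).fun_sub
      ((hasDerivAt_id' x).fun_pow 2)).congr_deriv ?_
    ring
  apply strictMonoOn_of_deriv_pos (convex_Ioi 0)
  · exact fun x hx => (hderiv x hx).continuousAt.continuousWithinAt
  · rw [interior_Ioi]
    intro x hx
    obtain ⟨-, hpos, hineq⟩ := he x hx
    rw [(hderiv x hx).deriv]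
    rw [div_lt_iff₀ (by linarith)] at hineq
    linarith

open Filter Topology in
theorem one_le_sq_add_one_sub_sq {θ : ℝ} (hθ : 0 < θ) : 1 ≤ (e θ + 1) ^ 2 - θ ^ 2 := by
  have hlim : Tendsto (fun ξ : ℝ => 1 - ξ ^ 2) (𝓝[>] 0) (𝓝 1) := by
    have hcont : Continuous fun ξ : ℝ => 1 - ξ ^ 2 := by fun_prop
    simpa using (hcont.tendsto 0).mono_left nhdsWithin_le_nhds
  refine le_of_tendsto hlim ?_
  filter_upwards [Ioo_mem_nhdsGT hθ] with ξ ⟨hξ, hξθ⟩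
  have hmono := he.strictMonoOn_sq_add_one_sub_sq hξ (Set.mem_Ioi.2 hθ) hξθ
  nlinarith [(he ξ hξ).2.1]

theorem one_add_sq_lt_sq_add_one {θ : ℝ} (hθ : 0 < θ) : 1 + θ ^ 2 < (e θ + 1) ^ 2 := by
  have hhalf := he.one_le_sq_add_one_sub_sq (half_pos hθ)
  have hmono :=
    he.strictMonoOn_sq_add_one_sub_sq (half_pos hθ) (Set.mem_Ioi.2 hθ) (half_lt_self hθ)
  simp only at hmono
  linarith

theorem hfun_sq_sub_pos {θ : ℝ} (hθ : 0 < θ) : 0 < hfun e θ ^ 2 - 2 * hfun e θ * θ - 1 := by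
  have := he.one_add_sq_lt_sq_add_one hθ
  rw [hfun]
  nlinarith

theorem two_mul_lt_hfun {θ : ℝ} (hθ : 0 < θ) : 2 * θ < hfun e θ := by
  have := he.one_add_sq_lt_sq_add_one hθ
  have := (he θ hθ).2.1
  rw [hfun]
  nlinarith

end IsSyngeEOS

section Euclidean

variable {d : ℕ}

theorem sq_apply_le_nsq (v : Fin d → ℝ) (i : Fin d) : v i ^ 2 ≤ nsq v :=
  Finset.single_le_sum (f := fun j => v j ^ 2) (fun _ _ => sq_nonneg _) (Finset.mem_univ i)

theorem abs_apply_lt_one_of_nsq_lt_one {v : Fin d → ℝ} (hv : nsq v < 1) (i : Fin d) :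
    |v i| < 1 :=
  (sq_lt_one_iff_abs_lt_one _).1 ((sq_apply_le_nsq v i).trans_lt hv)

theorem nsq_lt_one_of_nrm_lt_one {v : Fin d → ℝ} (hv : nrm v < 1) : nsq v < 1 := by
  rwa [nrm, Real.sqrt_lt' one_pos, one_pow] at hv

theorem nsq_mul_add_mul_ite (A B : ℝ) (v : Fin d → ℝ) (i : Fin d) :
    nsq (fun j => A * v j + B * (if j = i then 1 else 0))
      = A ^ 2 * nsq v + 2 * A * B * v i + B ^ 2 := by
  have hterm : ∀ j, (A * v j + B * (if j = i then 1 else 0)) ^ 2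
      = A ^ 2 * v j ^ 2 + (if j = i then 2 * A * B * v j + B ^ 2 else 0) := by
    intro j
    split_ifs <;> ring
  simp only [nsq, hterm, Finset.sum_add_distrib, Finset.sum_ite_eq', Finset.mem_univ, if_true,
    ← Finset.mul_sum]
  ring

theorem sq_mul_add_dotp_le (a x : ℝ) (b y : Fin d → ℝ) :
    (a * x + dotp b y) ^ 2 ≤ (a ^ 2 + nsq b) * (x ^ 2 + nsq y) := by
  simpa [dotp, nsq, Fin.sum_univ_succ] using
    Finset.sum_mul_sq_le_sq_mul_sq Finset.univ (Fin.cons a b : Fin (d + 1) → ℝ) (Fin.cons x y)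

theorem dot3_ntil_pos {w : ℝ × (Fin d → ℝ) × ℝ} {vs : Fin d → ℝ} (hvs : nsq vs ≤ 1)
    (hw₀ : 0 < w.2.2) (hw : w.1 ^ 2 + nsq w.2.1 < w.2.2 ^ 2) : 0 < dot3 w (ntil vs) := by
  have hcs := sq_mul_add_dotp_le w.1 (Real.sqrt (1 - nsq vs)) w.2.1 vs
  rw [Real.sq_sqrt (by linarith), sub_add_cancel, mul_one] at hcs
  have hlt := abs_lt_of_sq_lt_sq' (hcs.trans_lt hw) hw₀.le
  simp only [dot3, ntil, dotp, mul_neg, Finset.sum_neg_distrib] at hlt ⊢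
  linarith [hlt.2]

end Euclidean

theorem gam_pos {d : ℕ} {v : Fin d → ℝ} (hv : nsq v < 1) : 0 < gam v := by
  have : 0 < Real.sqrt (1 - nsq v) := Real.sqrt_pos.2 (by linarith)
  rw [gam]
  positivity

theorem gam_sq_mul_one_sub_nsq {d : ℕ} {v : Fin d → ℝ} (hv : nsq v < 1) :
    gam v ^ 2 * (1 - nsq v) = 1 := by
  rw [gam, div_pow, one_pow, Real.sq_sqrt (by linarith), one_div_mul_cancel (by linarith)]

theorem neg_mul_abs_le_mul {β s : ℝ} (hs : |s| ≤ β) (x : ℝ) : -(β * |x|) ≤ s * x := by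
  have : |s * x| ≤ β * |x| := by
    rw [abs_mul]
    exact mul_le_mul_of_nonneg_right hs (abs_nonneg x)
  linarith [neg_abs_le (s * x)]

theorem add_mul_pos_of_abs_le {β s x : ℝ} (hβ : 0 < β) (hs : |s| ≤ β) (hx : |x| < 1) :
    0 < β + s * x := by
  nlinarith [neg_mul_abs_le_mul hs x]

section Combination

variable {e : ℝ → ℝ} {d : ℕ} {i : Fin d} {ρ θ β s : ℝ} {v : Fin d → ℝ}

variable (e i ρ v θ β s) in
theorem smul_Uvec_add_smul_Fvec :
    β • Uvec e ρ v θ + s • Fvec e i ρ v θ =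
      (ρ * gam v * (β + s * v i),
       fun j => ρ * hfun e θ * gam v ^ 2 * (β + s * v i) * v j
         + s * ρ * θ * (if j = i then 1 else 0),
       ρ * hfun e θ * gam v ^ 2 * (β + s * v i) - β * ρ * θ) := by
  ext <;> simp only [Uvec, Fvec, Prod.fst_add, Prod.snd_add, Prod.smul_fst, Prod.smul_snd,
    Pi.add_apply, Pi.smul_apply, smul_eq_mul] <;> ring

theorem smul_Uvec_add_smul_Fvec_energy_pos (hρ : 0 < ρ) (hθ : 0 < θ) (hv : nsq v < 1)
    (hβ : 0 < β) (hs : |s| ≤ β) (hh : 2 * θ < hfun e θ) :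
    0 < (β • Uvec e ρ v θ + s • Fvec e i ρ v θ).2.2 := by
  rw [smul_Uvec_add_smul_Fvec]
  have hvi := abs_apply_lt_one_of_nsq_lt_one hv i
  have hγK : 0 < gam v ^ 2 * (β + s * v i) :=
    mul_pos (pow_pos (gam_pos hv) 2) (add_mul_pos_of_abs_le hβ hs hvi)
  -- `β (1 + |v|²) + 2 s vᵢ ≥ β (1 - |vᵢ|)² ≥ 0`, i.e. `β ≤ 2 γ² (β + s vᵢ)`
  have hβle : β ≤ 2 * (gam v ^ 2 * (β + s * v i)) := by
    have h1 : β * (1 - nsq v) ≤ 2 * (β + s * v i) := by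
      nlinarith [neg_mul_abs_le_mul hs (v i), sq_abs (v i), sq_apply_le_nsq v i,
        mul_nonneg hβ.le (sq_nonneg (1 - |v i|))]
    nlinarith [mul_le_mul_of_nonneg_left h1 (sq_nonneg (gam v)), gam_sq_mul_one_sub_nsq hv]
  have : β * θ < hfun e θ * (gam v ^ 2 * (β + s * v i)) := by nlinarith
  nlinarith

theorem smul_Uvec_add_smul_Fvec_timelike (hρ : 0 < ρ) (hv : nsq v < 1) (hβ : 0 < β)
    (hs : |s| ≤ β) (hh : 0 < hfun e θ ^ 2 - 2 * hfun e θ * θ - 1) :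
    (β • Uvec e ρ v θ + s • Fvec e i ρ v θ).1 ^ 2
        + nsq (β • Uvec e ρ v θ + s • Fvec e i ρ v θ).2.1
      < (β • Uvec e ρ v θ + s • Fvec e i ρ v θ).2.2 ^ 2 := by
  rw [smul_Uvec_add_smul_Fvec, nsq_mul_add_mul_ite]
  have hK := add_mul_pos_of_abs_le hβ hs (abs_apply_lt_one_of_nsq_lt_one hv i)
  have hs2 : s ^ 2 ≤ β ^ 2 := sq_le_sq' (neg_le_of_abs_le hs) (le_of_abs_le hs)
  have hid : (ρ * hfun e θ * gam v ^ 2 * (β + s * v i) - β * ρ * θ) ^ 2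
      - ((ρ * gam v * (β + s * v i)) ^ 2
        + ((ρ * hfun e θ * gam v ^ 2 * (β + s * v i)) ^ 2 * nsq v
          + 2 * (ρ * hfun e θ * gam v ^ 2 * (β + s * v i)) * (s * ρ * θ) * v i
          + (s * ρ * θ) ^ 2))
      = ρ ^ 2 * (gam v ^ 2 * (β + s * v i) ^ 2 * (hfun e θ ^ 2 - 2 * hfun e θ * θ - 1)
          + (β ^ 2 - s ^ 2) * θ ^ 2) := by
    linear_combination (ρ ^ 2 * hfun e θ ^ 2 * gam v ^ 2 * (β + s * v i) ^ 2)
      * gam_sq_mul_one_sub_nsq hv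
  have : 0 < ρ ^ 2 * (gam v ^ 2 * (β + s * v i) ^ 2 * (hfun e θ ^ 2 - 2 * hfun e θ * θ - 1)
      + (β ^ 2 - s ^ 2) * θ ^ 2) := by
    have hγ := gam_pos hv
    have hβs : 0 ≤ (β ^ 2 - s ^ 2) * θ ^ 2 := mul_nonneg (by linarith) (sq_nonneg θ)
    positivity
  linarith

end Combination

theorem minimum_entropy_stmt10_general (e : ℝ → ℝ)
    (hdiff : ∀ ξ : ℝ, 0 < ξ → DifferentiableAt ℝ e ξ)
    (hpos : ∀ ξ : ℝ, 0 < ξ → 0 < e ξ)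
    (hineq : ∀ ξ : ℝ, 0 < ξ → ξ / (e ξ + 1) < deriv e ξ)
    (d : ℕ)
    (ρ : ℝ) (v : Fin d → ℝ) (θ : ℝ)
    (hρ : 0 < ρ) (hθ : 0 < θ) (hv : nrm v < 1)
    (β : ℝ) (hβ : 1 ≤ β) (i : Fin d)
    (s : ℝ) (hs : s = 1 ∨ s = -1)
    (vs : Fin d → ℝ) (hvs : nrm vs < 1) :
    0 < dot3 (β • Uvec e ρ v θ + s • Fvec e i ρ v θ) (ntil vs) := by
  have he : IsSyngeEOS e := fun ξ hξ => ⟨hdiff ξ hξ, hpos ξ hξ, hineq ξ hξ⟩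
  have hv' := nsq_lt_one_of_nrm_lt_one hv
  have hβ' : 0 < β := by linarith
  have hs' : |s| ≤ β := by rcases hs with rfl | rfl <;> simpa
  exact dot3_ntil_pos (nsq_lt_one_of_nrm_lt_one hvs).le
    (smul_Uvec_add_smul_Fvec_energy_pos hρ hθ hv' hβ' hs' (he.two_mul_lt_hfun hθ))
    (smul_Uvec_add_smul_Fvec_timelike hρ hv' hβ' hs' (he.hfun_sq_sub_pos hθ))

/-- Let `e` be a Synge-type EOS, `d ≥ 1`, and `(ρ,v,θ)` a primitive
state with `U = U(ρ,v,θ)`, `F_i = F_i(ρ,v,θ)`. Then for every `β ≥ 1`, every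
`i ∈ {1,…,d}`, every sign `s ∈ {+1,−1}`, and every `v_*` in the open unit ball,
`(βU + s·F_i)·ñ_*(v_*) > 0`. -/
theorem minimum_entropy_stmt10 (e : ℝ → ℝ)
    (hdiff : ∀ ξ : ℝ, 0 < ξ → DifferentiableAt ℝ e ξ)
    (hpos : ∀ ξ : ℝ, 0 < ξ → 0 < e ξ)
    (hineq : ∀ ξ : ℝ, 0 < ξ → ξ / (e ξ + 1) < deriv e ξ)
    (d : ℕ) (hd : 1 ≤ d)
    (ρ : ℝ) (v : Fin d → ℝ) (θ : ℝ)
    (hρ : 0 < ρ) (hθ : 0 < θ) (hv : nrm v < 1)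
    (β : ℝ) (hβ : 1 ≤ β) (i : Fin d)
    (s : ℝ) (hs : s = 1 ∨ s = -1)
    (vs : Fin d → ℝ) (hvs : nrm vs < 1) :
    0 < dot3 (β • Uvec e ρ v θ + s • Fvec e i ρ v θ) (ntil vs) :=
  minimum_entropy_stmt10_general e hdiff hpos hineq d ρ v θ hρ hθ hv β hβ i s hs vs hvs
end
end

section
/- Let e : (0,∞) → ℝ be a Synge-type EOS and d ≥ 1. Let (ρ, v, θ) be a primitive state (ρ > 0, θ > 0, |v| < 1) with U = U(ρ,v,θ) and F_i = F_i(ρ,v,θ). Then for every β ≥ 1, every unit vector ξ ∈ ℝ^d, every sign s ∈ {+1,−1}, and every v_* ∈ ℝ^d with |v_*| < 1, one has (βU + s·Σ_{i=1}^d ξ_i F_i)·ñ_*(v_*) > 0. -/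
open scoped BigOperators

noncomputable section

/-! ### Auxiliary lemmas -/

private lemma le_of_sq_le_sq' {a b : ℝ} (ha : 0 ≤ a) (hb : 0 ≤ b) (h : a ^ 2 ≤ b ^ 2) :
    a ≤ b := by nlinarith

private lemma pfst_sum {α M N : Type*} [AddCommMonoid M] [AddCommMonoid N]
    (s : Finset α) (f : α → M × N) : (∑ i ∈ s, f i).1 = ∑ i ∈ s, (f i).1 :=
  map_sum (AddMonoidHom.fst M N) f s

private lemma psnd_sum {α M N : Type*} [AddCommMonoid M] [AddCommMonoid N]
    (s : Finset α) (f : α → M × N) : (∑ i ∈ s, f i).2 = ∑ i ∈ s, (f i).2 :=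
  map_sum (AddMonoidHom.snd M N) f s

private lemma nsq_nonneg' {d : ℕ} (v : Fin d → ℝ) : 0 ≤ nsq v :=
  Finset.sum_nonneg fun _ _ => sq_nonneg _

private lemma sq_nrm {d : ℕ} (v : Fin d → ℝ) : nrm v ^ 2 = nsq v :=
  Real.sq_sqrt (nsq_nonneg' v)

private lemma abs_dotp_le {d : ℕ} (f g : Fin d → ℝ) : |dotp f g| ≤ nrm f * nrm g := by
  refine le_of_sq_le_sq' (abs_nonneg _)
    (mul_nonneg (Real.sqrt_nonneg _) (Real.sqrt_nonneg _)) ?_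
  rw [sq_abs, mul_pow, sq_nrm, sq_nrm]
  exact Finset.sum_mul_sq_le_sq_mul_sq Finset.univ f g

private lemma nsq_lin {d : ℕ} (v w : Fin d → ℝ) (A B : ℝ) :
    nsq (fun j => A * v j + B * w j)
      = A ^ 2 * nsq v + 2 * A * B * dotp v w + B ^ 2 * nsq w := by
  simp only [nsq, dotp, Finset.mul_sum, ← Finset.sum_add_distrib]
  exact Finset.sum_congr rfl fun i _ => by ring

private lemma dotp_lin {d : ℕ} (f v w : Fin d → ℝ) (A B : ℝ) :
    dotp f (fun j => A * v j + B * w j) = A * dotp f v + B * dotp f w := by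
  simp only [dotp, Finset.mul_sum, ← Finset.sum_add_distrib]
  exact Finset.sum_congr rfl fun i _ => by ring

private lemma dotp_lin_left {d : ℕ} (v w z : Fin d → ℝ) (A B : ℝ) :
    dotp (fun j => A * v j + B * w j) z = A * dotp v z + B * dotp w z := by
  simp only [dotp, Finset.mul_sum, ← Finset.sum_add_distrib]
  exact Finset.sum_congr rfl fun i _ => by ring

private lemma dotp_neg_right {d : ℕ} (f g : Fin d → ℝ) :
    dotp f (fun j => -g j) = -dotp f g := by
  simp [dotp, mul_neg, Finset.sum_neg_distrib]

/-- Synge EOS lower bound: `h(θ) > θ + √(1+θ²)`. -/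
private lemma synge_h_lower (e : ℝ → ℝ)
    (hdiff : ∀ ξ : ℝ, 0 < ξ → DifferentiableAt ℝ e ξ)
    (hpos : ∀ ξ : ℝ, 0 < ξ → 0 < e ξ)
    (hineq : ∀ ξ : ℝ, 0 < ξ → ξ / (e ξ + 1) < deriv e ξ)
    {θ : ℝ} (hθ : 0 < θ) : θ + Real.sqrt (1 + θ ^ 2) < hfun e θ := by
  set g : ℝ → ℝ := fun x => (e x + 1) ^ 2 - x ^ 2 with hgdef
  have hder : ∀ x ∈ Set.Ioi (0 : ℝ), HasDerivAt g (2 * (e x + 1) * deriv e x - 2 * x) x := by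
    intro x hx
    have h1 : HasDerivAt e (deriv e x) x := (hdiff x hx).hasDerivAt
    have h2 : HasDerivAt (fun y => (e y + 1) ^ 2)
        ((2 : ℕ) * (e x + 1) ^ 1 * deriv e x) x := by
      simpa using (h1.add_const 1).fun_pow 2
    have h3 : HasDerivAt (fun y : ℝ => y ^ 2) (2 * x) x := by
      simpa using hasDerivAt_pow 2 x
    have h4 := h2.sub h3
    refine h4.congr_deriv ?_
    push_cast
    ring
  have hmono : StrictMonoOn g (Set.Ioi (0 : ℝ)) := by
    apply strictMonoOn_of_deriv_pos (convex_Ioi 0)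
    · intro x hx
      exact ((hder x hx).differentiableAt.continuousAt).continuousWithinAt
    · intro x hx
      rw [interior_Ioi] at hx
      rw [(hder x hx).deriv]
      have he := hpos x hx
      have hi := hineq x hx
      rw [div_lt_iff₀ (by linarith)] at hi
      have hx0 : (0 : ℝ) < x := hx
      nlinarith
  have hg1 : ∀ x : ℝ, 0 < x → 1 ≤ g x := by
    intro x hx
    by_contra hcon
    push_neg at hcon
    have hδ0 : 0 < 1 - g x := by linarith
    set ε := min (x / 2) (Real.sqrt (1 - g x) / 2) with hεdef
    have hε0 : 0 < ε := lt_min (by linarith) (by positivity)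
    have hεx : ε < x := lt_of_le_of_lt (min_le_left _ _) (by linarith)
    have hε2 : ε ^ 2 < 1 - g x := by
      have h1 : ε ≤ Real.sqrt (1 - g x) / 2 := min_le_right _ _
      have h2 : Real.sqrt (1 - g x) ^ 2 = 1 - g x := Real.sq_sqrt hδ0.le
      nlinarith [Real.sqrt_nonneg (1 - g x)]
    have hgε : g ε < g x := hmono (Set.mem_Ioi.2 hε0) (Set.mem_Ioi.2 hx) hεx
    have hlow : 1 - ε ^ 2 < g ε := by
      have he := hpos ε hε0
      simp only [hgdef]
      nlinarith
    linarith
  have hgθ : 1 < g θ := by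
    have h1 : g (θ / 2) < g θ :=
      hmono (Set.mem_Ioi.2 (by linarith)) (Set.mem_Ioi.2 hθ) (by linarith)
    have h2 := hg1 (θ / 2) (by linarith)
    exact lt_of_le_of_lt h2 h1
  have h2 : 1 + θ ^ 2 < (e θ + 1) ^ 2 := by
    simp only [hgdef] at hgθ; linarith
  have h3 : Real.sqrt (1 + θ ^ 2) < e θ + 1 :=
    (Real.sqrt_lt' (by linarith [hpos θ hθ])).2 h2
  simp only [hfun]; linarith

set_option maxHeartbeats 1600000

/-- Let `e` be a Synge-type EOS, `d ≥ 1`, and `(ρ,v,θ)` a primitive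
state with `U = U(ρ,v,θ)`, `F_i = F_i(ρ,v,θ)`. Then for every `β ≥ 1`, every unit
vector `ξ ∈ ℝ^d`, every sign `s ∈ {+1,−1}`, and every `v_*` in the open unit ball,
`(βU + s·Σ_i ξ_i F_i)·ñ_*(v_*) > 0`. -/
theorem minimum_entropy_stmt16 (e : ℝ → ℝ)
    (hdiff : ∀ ξ : ℝ, 0 < ξ → DifferentiableAt ℝ e ξ)
    (hpos : ∀ ξ : ℝ, 0 < ξ → 0 < e ξ)
    (hineq : ∀ ξ : ℝ, 0 < ξ → ξ / (e ξ + 1) < deriv e ξ)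
    (d : ℕ) (hd : 1 ≤ d)
    (ρ : ℝ) (v : Fin d → ℝ) (θ : ℝ)
    (hρ : 0 < ρ) (hθ : 0 < θ) (hv : nrm v < 1)
    (β : ℝ) (hβ : 1 ≤ β)
    (ξ : Fin d → ℝ) (hξ : nrm ξ = 1)
    (s : ℝ) (hs : s = 1 ∨ s = -1)
    (vs : Fin d → ℝ) (hvs : nrm vs < 1) :
    0 < dot3 (β • Uvec e ρ v θ + s • ∑ i, ξ i • Fvec e i ρ v θ) (ntil vs) := by
  -- basic norm facts
  have hξ0 : 0 ≤ nrm ξ := Real.sqrt_nonneg _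
  have hv0 : 0 ≤ nrm v := Real.sqrt_nonneg _
  have hvs0 : 0 ≤ nrm vs := Real.sqrt_nonneg _
  have hu : nsq v < 1 := by rw [← sq_nrm]; nlinarith
  have hus : nsq vs < 1 := by rw [← sq_nrm]; nlinarith
  have hu0 : 0 ≤ nsq v := nsq_nonneg' v
  have hus0 : 0 ≤ nsq vs := nsq_nonneg' vs
  set k := dotp ξ v with hkdef
  set ks := dotp ξ vs with hksdef
  set m := dotp v vs with hmdef
  have hkabs : |k| ≤ nrm v := by
    have h := abs_dotp_le ξ v; rwa [hξ, one_mul] at h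
  have hksabs : |ks| ≤ nrm vs := by
    have h := abs_dotp_le ξ vs; rwa [hξ, one_mul] at h
  have hmabs : |m| ≤ nrm v * nrm vs := abs_dotp_le v vs
  have hm1 : m < 1 := by
    have h1 : nrm v * nrm vs < 1 := by nlinarith
    have h2 := le_abs_self m
    linarith [hmabs]
  have hc : 0 < β + s * k := by
    have h1 : |s * k| = |k| := by rcases hs with rfl | rfl <;> simp
    have h2 := neg_abs_le (s * k)
    rw [h1] at h2
    linarith [le_abs_self k, abs_nonneg k]
  -- computation of the flux sum
  have hsumF : (∑ i, ξ i • Fvec e i ρ v θ)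
      = (ρ * gam v * k,
         fun j => ρ * hfun e θ * gam v ^ 2 * k * v j + ρ * θ * ξ j,
         ρ * hfun e θ * gam v ^ 2 * k) := by
    refine Prod.ext ?_ (Prod.ext ?_ ?_)
    · rw [pfst_sum]
      simp only [Prod.smul_fst, smul_eq_mul, Fvec]
      rw [hkdef, dotp, Finset.mul_sum]
      exact Finset.sum_congr rfl fun i _ => by ring
    · show (∑ i, ξ i • Fvec e i ρ v θ).2.1 = _
      rw [psnd_sum, pfst_sum]
      funext j
      rw [Finset.sum_apply]
      simp only [Prod.smul_snd, Prod.smul_fst, Pi.smul_apply, smul_eq_mul, Fvec]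
      have hsplit : ∀ i : Fin d,
          ξ i * (ρ * hfun e θ * gam v ^ 2 * v i * v j + ρ * θ * (if j = i then 1 else 0))
            = ρ * hfun e θ * gam v ^ 2 * (ξ i * v i) * v j
              + (if j = i then ξ i * (ρ * θ) else 0) := by
        intro i; by_cases h : j = i <;> simp [h] <;> ring
      rw [Finset.sum_congr rfl fun i _ => hsplit i, Finset.sum_add_distrib,
        Finset.sum_ite_eq]
      simp only [Finset.mem_univ, if_true]
      rw [← Finset.sum_mul, ← Finset.mul_sum, hkdef, dotp]
      ring
    · show (∑ i, ξ i • Fvec e i ρ v θ).2.2 = _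
      rw [psnd_sum, psnd_sum]
      simp only [Prod.smul_snd, smul_eq_mul, Fvec]
      rw [hkdef, dotp, Finset.mul_sum]
      exact Finset.sum_congr rfl fun i _ => by ring
  -- the combined state vector
  have hW : β • Uvec e ρ v θ + s • ∑ i, ξ i • Fvec e i ρ v θ
      = (ρ * gam v * (β + s * k),
         fun j => (ρ * hfun e θ * gam v ^ 2 * (β + s * k)) * v j + (s * (ρ * θ)) * ξ j,
         ρ * hfun e θ * gam v ^ 2 * (β + s * k) - β * (ρ * θ)) := by
    rw [hsumF]
    refine Prod.ext ?_ (Prod.ext ?_ ?_)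
    · simp only [Prod.fst_add, Prod.smul_fst, smul_eq_mul, Uvec]
      ring
    · funext j
      simp only [Prod.snd_add, Prod.fst_add, Prod.smul_snd, Prod.smul_fst, Pi.add_apply,
        Pi.smul_apply, smul_eq_mul, Uvec]
      ring
    · simp only [Prod.snd_add, Prod.smul_snd, smul_eq_mul, Uvec]
      ring
  -- the value of the inner product
  have hval : dot3 (β • Uvec e ρ v θ + s • ∑ i, ξ i • Fvec e i ρ v θ) (ntil vs)
      = ρ * ((β + s * k) * (hfun e θ * gam v ^ 2 * (1 - m)
            - gam v * Real.sqrt (1 - nsq vs)) - θ * (β + s * ks)) := by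
    rw [hW]
    simp only [dot3, ntil]
    rw [dotp_lin_left, dotp_neg_right, dotp_neg_right, ← hmdef, ← hksdef]
    ring
  rw [hval]
  refine mul_pos hρ ?_
  clear hval hW hsumF
  -- abbreviations
  set a := Real.sqrt (1 - nsq vs) with hadef
  set b := Real.sqrt (1 - nsq v) with hbdef
  set c := β + s * k with hcdef
  set Dd := β + s * ks with hDdef
  have hb0 : 0 < b := Real.sqrt_pos.2 (by linarith)
  have ha0 : 0 < a := Real.sqrt_pos.2 (by linarith)
  have hb2 : b ^ 2 = 1 - nsq v := Real.sq_sqrt (by linarith)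
  have ha2 : a ^ 2 = 1 - nsq vs := Real.sq_sqrt (by linarith)
  have hgam : gam v = 1 / b := by rw [hbdef]; rfl
  -- the quantity Q and q = sqrt Q
  have hvv : 0 ≤ nsq v + nsq vs - 2 * m := by
    have h := nsq_nonneg' (fun j => 1 * v j + (-1) * vs j)
    rw [nsq_lin, ← hmdef] at h
    linarith
  have hQ0 : 0 ≤ (1 - m) ^ 2 - (1 - nsq vs) * (1 - nsq v) := by
    linarith [sq_nonneg (nsq v - m),
      mul_nonneg (by linarith : (0:ℝ) ≤ 1 - nsq v) hvv]
  set q := Real.sqrt ((1 - m) ^ 2 - (1 - nsq vs) * (1 - nsq v)) with hqdef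
  have hq0 : 0 ≤ q := Real.sqrt_nonneg _
  have hq2 : q ^ 2 = (1 - m) ^ 2 - (1 - nsq vs) * (1 - nsq v) := Real.sq_sqrt hQ0
  have hPq : |nsq v - m| ≤ q := by
    refine le_of_sq_le_sq' (abs_nonneg _) hq0 ?_
    rw [sq_abs, hq2]
    linarith [mul_nonneg (by linarith : (0:ℝ) ≤ 1 - nsq v) hvv]
  have hPq1 := (abs_le.1 hPq).1
  have hPq2 := (abs_le.1 hPq).2
  -- Cauchy-Schwarz bounds
  have hT1 : nsq (fun j => (1 - m - q) * v j + (-(1 - nsq v)) * vs j)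
      = (q - (nsq v - m)) ^ 2 := by
    rw [nsq_lin, ← hmdef]
    linear_combination (nsq v - 1) * hq2
  have hT2 : nsq (fun j => (1 - m + q) * v j + (-(1 - nsq v)) * vs j)
      = (q + (nsq v - m)) ^ 2 := by
    rw [nsq_lin, ← hmdef]
    linear_combination (nsq v - 1) * hq2
  have hv1 : dotp ξ (fun j => (1 - m - q) * v j + (-(1 - nsq v)) * vs j)
      = (1 - m - q) * k + (-(1 - nsq v)) * ks := by
    rw [dotp_lin, ← hkdef, ← hksdef]
  have hv2 : dotp ξ (fun j => (1 - m + q) * v j + (-(1 - nsq v)) * vs j)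
      = (1 - m + q) * k + (-(1 - nsq v)) * ks := by
    rw [dotp_lin, ← hkdef, ← hksdef]
  have hcs1 : |(1 - m - q) * k + (-(1 - nsq v)) * ks| ≤ q - (nsq v - m) := by
    rw [← hv1]
    have h := abs_dotp_le ξ (fun j => (1 - m - q) * v j + (-(1 - nsq v)) * vs j)
    rw [hξ, one_mul] at h
    refine h.trans_eq ?_
    rw [nrm, hT1, Real.sqrt_sq (by linarith)]
  have hcs2 : |(1 - m + q) * k + (-(1 - nsq v)) * ks| ≤ q + (nsq v - m) := by
    rw [← hv2]
    have h := abs_dotp_le ξ (fun j => (1 - m + q) * v j + (-(1 - nsq v)) * vs j)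
    rw [hξ, one_mul] at h
    refine h.trans_eq ?_
    rw [nrm, hT2, Real.sqrt_sq (by linarith)]
  -- bound on N = c(1-m) - Dd(1-|v|²)
  have hexp1 : c * (1 - m) - Dd * (1 - nsq v) - c * q
      = β * ((nsq v - m) - q) + s * ((1 - m - q) * k + (-(1 - nsq v)) * ks) := by
    rw [hcdef, hDdef]; ring
  have hexp2 : c * (1 - m) - Dd * (1 - nsq v) + c * q
      = β * ((nsq v - m) + q) + s * ((1 - m + q) * k + (-(1 - nsq v)) * ks) := by
    rw [hcdef, hDdef]; ring
  have hsd1 : s * ((1 - m - q) * k + (-(1 - nsq v)) * ks) ≤ q - (nsq v - m) := by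
    rcases hs with rfl | rfl
    · rw [one_mul]; exact (le_abs_self _).trans hcs1
    · rw [neg_one_mul]; exact (neg_le_abs _).trans hcs1
  have hsd2 : -(q + (nsq v - m)) ≤ s * ((1 - m + q) * k + (-(1 - nsq v)) * ks) := by
    rcases hs with rfl | rfl
    · rw [one_mul]; linarith [neg_abs_le ((1 - m + q) * k + (-(1 - nsq v)) * ks), hcs2]
    · rw [neg_one_mul]; linarith [le_abs_self ((1 - m + q) * k + (-(1 - nsq v)) * ks), hcs2]
  have hb1 : β * ((nsq v - m) - q) ≤ (nsq v - m) - q := by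
    linarith [mul_nonneg (by linarith : (0:ℝ) ≤ β - 1)
      (by linarith : (0:ℝ) ≤ q - (nsq v - m))]
  have hb1' : (nsq v - m) + q ≤ β * ((nsq v - m) + q) := by
    linarith [mul_nonneg (by linarith : (0:ℝ) ≤ β - 1)
      (by linarith : (0:ℝ) ≤ q + (nsq v - m))]
  have hNle : c * (1 - m) - Dd * (1 - nsq v) ≤ c * q := by linarith
  have hNge : -(c * q) ≤ c * (1 - m) - Dd * (1 - nsq v) := by linarith
  have hNabs : |c * (1 - m) - Dd * (1 - nsq v)| ≤ c * q := abs_le.2 ⟨hNge, hNle⟩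
  set N := c * (1 - m) - Dd * (1 - nsq v) with hNdef
  -- key quadratic bound
  have hA : N ^ 2 + (c * a * b) ^ 2 ≤ (c * (1 - m)) ^ 2 := by
    have h1 : N ^ 2 ≤ (c * q) ^ 2 := by
      rw [← sq_abs N]; exact pow_le_pow_left₀ (abs_nonneg N) hNabs 2
    have h2 : (c * q) ^ 2 = c ^ 2 * ((1 - m) ^ 2 - (1 - nsq vs) * (1 - nsq v)) := by
      rw [mul_pow, hq2]
    have h3 : (c * a * b) ^ 2 = c ^ 2 * ((1 - nsq vs) * (1 - nsq v)) := by
      rw [mul_pow, mul_pow, ha2, hb2]; ring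
    linarith
  -- Synge bound and final assembly
  have hsy := synge_h_lower e hdiff hpos hineq hθ
  set T := Real.sqrt (1 + θ ^ 2) with hTdef
  have hT2' : T ^ 2 = 1 + θ ^ 2 := Real.sq_sqrt (by positivity)
  have hT0 : 0 ≤ T := Real.sqrt_nonneg _
  have hT1' : 1 ≤ T :=
    le_of_sq_le_sq' zero_le_one hT0 (by rw [hT2']; linarith [sq_nonneg θ])
  have hcm : 0 < c * (1 - m) := mul_pos hc (by linarith)
  have hS0 : 0 ≤ c * a * b := by positivity
  have hSR : c * a * b ≤ c * (1 - m) :=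
    le_of_sq_le_sq' hS0 hcm.le (by linarith [sq_nonneg N])
  have hGex : 0 ≤ (c * (1 - m)) ^ 2 - (c * a * b) ^ 2 := by linarith [sq_nonneg N]
  set G := Real.sqrt ((c * (1 - m)) ^ 2 - (c * a * b) ^ 2) with hGdef
  have hG0 : 0 ≤ G := Real.sqrt_nonneg _
  have hG2 : G ^ 2 = (c * (1 - m)) ^ 2 - (c * a * b) ^ 2 := Real.sq_sqrt hGex
  have hNG : |N| ≤ G :=
    le_of_sq_le_sq' (abs_nonneg _) hG0 (by rw [sq_abs, hG2]; linarith)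
  have hTRS : θ * G ≤ T * (c * (1 - m)) - c * a * b := by
    have hpos2 : 0 ≤ T * (c * (1 - m)) - c * a * b := by
      linarith [mul_le_mul_of_nonneg_right hT1' hcm.le]
    refine le_of_sq_le_sq' (by positivity) hpos2 ?_
    have hexp : (T * (c * (1 - m)) - c * a * b) ^ 2 - (θ * G) ^ 2
        = ((c * (1 - m)) - T * (c * a * b)) ^ 2 := by
      rw [mul_pow θ G, hG2]
      linear_combination ((c * (1 - m)) ^ 2 - (c * a * b) ^ 2) * hT2'
    linarith [sq_nonneg ((c * (1 - m)) - T * (c * a * b))]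
  have hθN : 0 ≤ θ * N + (T * (c * (1 - m)) - c * a * b) := by
    have h1 : θ * |N| ≤ θ * G := mul_le_mul_of_nonneg_left hNG hθ.le
    have h3 : θ * -|N| ≤ θ * N := mul_le_mul_of_nonneg_left (neg_abs_le N) hθ.le
    linarith
  have hbig : c * (θ + T) * (1 - m) < c * hfun e θ * (1 - m) := by
    linarith [mul_lt_mul_of_pos_left hsy hcm]
  -- go back from b² to the original expression
  rw [hgam]
  have hb2pos : 0 < b ^ 2 := by positivity
  have hEb : (c * (hfun e θ * (1 / b) ^ 2 * (1 - m) - 1 / b * a) - θ * Dd) * b ^ 2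
      = c * hfun e θ * (1 - m) - c * a * b - θ * (Dd * b ^ 2) := by
    field_simp
  have hNθ : θ * (Dd * b ^ 2) = θ * (c * (1 - m)) - θ * N := by
    rw [hNdef, hb2]; ring
  have hEbpos :
      0 < (c * (hfun e θ * (1 / b) ^ 2 * (1 - m) - 1 / b * a) - θ * Dd) * b ^ 2 := by
    rw [hEb, hNθ]
    linarith [hbig, hθN]
  rcases mul_pos_iff.1 hEbpos with ⟨h1, _⟩ | ⟨_, h2⟩
  · exact h1
  · linarith
end
end
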